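/- If O, A, B, C ∈ ℤ³ are vertices of a regular tetrahedron, then each coordinate of (A−O)+(B−O)+(C−O) is an even integer. -/

import Mathlib

/-!
Put `a = A - O`, `b = B - O`, `c = C - O` and let `s` be the squared side length, so that
`a ⬝ a = b ⬝ b = c ⬝ c = s` and `2 (a ⬝ b) = 2 (a ⬝ c) = 2 (b ⬝ c) = s`. A regular tetrahedron is
inscribed in a cube, and `a + b - c`, `a - b + c`, `-a + b + c` are twice the edges of that cube
at `O`: they are pairwise orthogonal with squared length `2 s`. Hence the integer matrix `M` with
these rows satisfies `M Mᵀ = 2 s • 1`, so also `Mᵀ M = 2 s • 1`. Column `i` of `M` then has an even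
sum of squares, so its entry sum, which is `a i + b i + c i`, is even.
-/

/-- Casting a vector of integers to a point of `ℝ³` (with the Euclidean structure). -/
noncomputable def intVec (v : Fin 3 → ℤ) : EuclideanSpace ℝ (Fin 3) :=
  (WithLp.equiv 2 (Fin 3 → ℝ)).symm fun i => (v i : ℝ)

open Matrix

namespace Matrix

variable {R n : Type*} [CommRing R] [Fintype n]

theorem transpose_mul_self_apply_self (M : Matrix n n R) (j : n) :
    (Mᵀ * M) j j = ∑ i, M i j ^ 2 := by
  simp only [mul_apply, transpose_apply, sq]

/-- Over an ordered ring `c = 0` forces `M = 0`; otherwise `det M ≠ 0`, and multiplying by the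
adjugate cancels `Mᵀ` in `(Mᵀ M - c • 1) Mᵀ = 0`. -/
theorem transpose_mul_self_eq_smul_one_of_mul_transpose_self [LinearOrder R]
    [IsStrictOrderedRing R] [DecidableEq n] {M : Matrix n n R} {c : R} (h : M * Mᵀ = c • 1) :
    Mᵀ * M = c • 1 := by
  rcases eq_or_ne c 0 with rfl | hc
  · have hM : M = 0 := by
      funext i
      exact dotProduct_self_eq_zero.mp (by simpa [mul_apply'] using congrFun (congrFun h i) i)
    simp [hM]
  · have hdet : Mᵀ.det ≠ 0 := by
      have hdet_mul := congrArg det h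
      rw [det_mul, det_smul, det_one, mul_one] at hdet_mul
      exact right_ne_zero_of_mul (hdet_mul ▸ pow_ne_zero _ hc)
    have hker : (Mᵀ * M - c • 1) * Mᵀ = 0 := by
      rw [sub_mul, Matrix.mul_assoc, h, Matrix.mul_smul, Matrix.smul_mul, Matrix.mul_one,
        Matrix.one_mul, sub_self]
    have hker_adj := congrArg (· * adjugate Mᵀ) hker
    simp only [Matrix.mul_assoc, mul_adjugate, Matrix.mul_smul, Matrix.mul_one,
      Matrix.zero_mul] at hker_adj
    exact sub_eq_zero.mp ((smul_eq_zero.mp hker_adj).resolve_left hdet)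

end Matrix

theorem Int.even_sum_sq_iff {ι : Type*} (s : Finset ι) (f : ι → ℤ) :
    Even (∑ i ∈ s, f i ^ 2) ↔ Even (∑ i ∈ s, f i) := by
  rw [← Int.even_sub, ← Finset.sum_sub_distrib]
  exact Finset.even_sum _ fun i _ => by simp [Int.even_sub, Int.even_pow]

section CubeEdges

variable {R n : Type*} [CommRing R]

def cubeEdges (a b c : n → R) : Matrix (Fin 3) n R :=
  ![a + b - c, a - b + c, -a + b + c]

theorem cubeEdges_mul_transpose [Fintype n] {a b c : n → R} {s : R} (ha : a ⬝ᵥ a = s)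
    (hb : b ⬝ᵥ b = s) (hc : c ⬝ᵥ c = s) (hab : (a - b) ⬝ᵥ (a - b) = s)
    (hac : (a - c) ⬝ᵥ (a - c) = s) (hbc : (b - c) ⬝ᵥ (b - c) = s) :
    cubeEdges a b c * (cubeEdges a b c)ᵀ = (2 * s) • 1 := by
  simp only [sub_dotProduct, dotProduct_sub, dotProduct_comm b a, dotProduct_comm c a,
    dotProduct_comm c b] at hab hac hbc
  ext k l
  rw [show (cubeEdges a b c * (cubeEdges a b c)ᵀ) k l = cubeEdges a b c k ⬝ᵥ cubeEdges a b c l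
    from rfl]
  fin_cases k <;> fin_cases l <;>
    simp only [cubeEdges, Fin.zero_eta, Fin.mk_one, Fin.reduceFinMk, Fin.isValue, cons_val_zero,
      cons_val_one, cons_val, add_dotProduct, sub_dotProduct, neg_dotProduct, dotProduct_add,
      dotProduct_sub, dotProduct_neg, dotProduct_comm b a, dotProduct_comm c a, dotProduct_comm c b,
      Matrix.smul_apply, smul_eq_mul, one_apply, Fin.reduceEq, ite_true, ite_false] <;>
    grind

theorem sum_cubeEdges_apply (a b c : n → R) (i : n) :
    ∑ k, cubeEdges a b c k i = a i + b i + c i := by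
  simp only [cubeEdges, Fin.sum_univ_three, Fin.isValue, cons_val_zero, cons_val_one,
    cons_val_two, tail_cons, head_cons, Pi.add_apply, Pi.sub_apply, Pi.neg_apply]
  ring

end CubeEdges

theorem dist_intVec_sq (v w : Fin 3 → ℤ) :
    dist (intVec v) (intVec w) ^ 2 = ((v - w) ⬝ᵥ (v - w) : ℤ) := by
  rw [EuclideanSpace.dist_eq, Real.sq_sqrt (by positivity)]
  simp [intVec, dotProduct, Real.dist_eq, sq]

theorem dist_intVec_eq_dist_intVec_iff {v w v' w' : Fin 3 → ℤ} :
    dist (intVec v) (intVec w) = dist (intVec v') (intVec w') ↔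
      (v - w) ⬝ᵥ (v - w) = (v' - w') ⬝ᵥ (v' - w') := by
  rw [← sq_eq_sq₀ dist_nonneg dist_nonneg, dist_intVec_sq, dist_intVec_sq, Int.cast_inj]

theorem tetrahedron_sum_coords_even_general (O A B C : Fin 3 → ℤ)
    (h1 : dist (intVec O) (intVec A) = dist (intVec O) (intVec B))
    (h2 : dist (intVec O) (intVec B) = dist (intVec O) (intVec C))
    (h3 : dist (intVec O) (intVec C) = dist (intVec A) (intVec B))
    (h4 : dist (intVec A) (intVec B) = dist (intVec A) (intVec C))
    (h5 : dist (intVec A) (intVec C) = dist (intVec B) (intVec C)) :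
    ∀ i, Even ((A - O) i + (B - O) i + (C - O) i) := by
  simp only [dist_comm (intVec O), dist_intVec_eq_dist_intVec_iff,
    ← sub_sub_sub_cancel_right A B O, ← sub_sub_sub_cancel_right A C O,
    ← sub_sub_sub_cancel_right B C O] at h1 h2 h3 h4 h5
  have hgram := cubeEdges_mul_transpose (a := A - O) (b := B - O) (c := C - O) rfl
    (by omega) (by omega) (by omega) (by omega) (by omega)
  intro i
  have hcol : ∑ k, cubeEdges (A - O) (B - O) (C - O) k i ^ 2 = 2 * ((A - O) ⬝ᵥ (A - O)) := by
    rw [← transpose_mul_self_apply_self,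
      transpose_mul_self_eq_smul_one_of_mul_transpose_self hgram]
    simp
  rw [← sum_cubeEdges_apply, ← Int.even_sum_sq_iff, hcol]
  exact even_two_mul _

/-- If `O, A, B, C ∈ ℤ³` are the vertices of a regular tetrahedron, then every coordinate
of `(A−O)+(B−O)+(C−O)` is even. -/
theorem tetrahedron_sum_coords_even (O A B C : Fin 3 → ℤ)
    (hOA : O ≠ A) (hOB : O ≠ B) (hOC : O ≠ C) (hAB : A ≠ B) (hAC : A ≠ C) (hBC : B ≠ C)
    (h1 : dist (intVec O) (intVec A) = dist (intVec O) (intVec B))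
    (h2 : dist (intVec O) (intVec B) = dist (intVec O) (intVec C))
    (h3 : dist (intVec O) (intVec C) = dist (intVec A) (intVec B))
    (h4 : dist (intVec A) (intVec B) = dist (intVec A) (intVec C))
    (h5 : dist (intVec A) (intVec C) = dist (intVec B) (intVec C)) :
    ∀ i, Even ((A - O) i + (B - O) i + (C - O) i) :=
  tetrahedron_sum_coords_even_general O A B C h1 h2 h3 h4 h5
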